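/- Let f : C_n → ℝ with Lip(f) = L and let h : ℝ → ℝ be twice differentiable with |h''(x)| < B for all x ∈ ℝ. Then for every x ∈ [−1,1]^n, ‖∇(h∘f)(x) − h'(f(x))·∇f(x)‖₁ ≤ 2 B L² n^{3/2}, where f, ∇f, and ∇(h∘f) are evaluated at x via their multilinear extensions. -/

import Mathlib

open MeasureTheory

noncomputable section

namespace Paper

/-- The Boolean hypercube `{-1,1}^n` as a finite set of vectors in `ℝ^n`. -/
def cube (n : ℕ) : Finset (Fin n → ℝ) := Fintype.piFinset fun _ => ({-1, 1} : Finset ℝ)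

/-- The ℓ¹ norm of a vector. -/
def onorm {n : ℕ} (v : Fin n → ℝ) : ℝ := ∑ i, |v i|

/-- The Euclidean (ℓ²) norm of a vector. -/
def tnorm {n : ℕ} (v : Fin n → ℝ) : ℝ := Real.sqrt (∑ i, (v i) ^ 2)

/-- Discrete derivative of `f` at coordinate `i`. -/
def dd {n : ℕ} (f : (Fin n → ℝ) → ℝ) (i : Fin n) (y : Fin n → ℝ) : ℝ :=
  (f (Function.update y i 1) - f (Function.update y i (-1))) / 2

/-- Discrete gradient of `f`. -/
def dgrad {n : ℕ} (f : (Fin n → ℝ) → ℝ) (y : Fin n → ℝ) : Fin n → ℝ := fun i => dd f i y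

/-- The multilinear (harmonic) extension of `f : C_n → ℝ` to `[-1,1]^n`. -/
def mlext {n : ℕ} (f : (Fin n → ℝ) → ℝ) (x : Fin n → ℝ) : ℝ :=
  ∑ S : Finset (Fin n),
    (((2 : ℝ) ^ n)⁻¹ * ∑ y ∈ cube n, f y * ∏ i ∈ S, y i) * ∏ i ∈ S, x i

/-- The multilinear extension of the discrete gradient of `f`. -/
def mlgrad {n : ℕ} (f : (Fin n → ℝ) → ℝ) (x : Fin n → ℝ) : Fin n → ℝ :=
  fun i => mlext (dd f i) x

/-- The Lipschitz constant `Lip(f) = max_{i,y∈C_n} |∂_i f(y)|`. -/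
def lip {n : ℕ} (f : (Fin n → ℝ) → ℝ) : ℝ :=
  sSup {a | ∃ i : Fin n, ∃ y ∈ cube n, a = |dd f i y|}

/-- The Lipschitz constant of the discrete gradient:
`max_{x ≠ y ∈ C_n} ‖∇f(x) - ∇f(y)‖₁ / ‖x - y‖₁`. -/
def gradLip {n : ℕ} (f : (Fin n → ℝ) → ℝ) : ℝ :=
  sSup {a | ∃ x ∈ cube n, ∃ y ∈ cube n, x ≠ y ∧
    a = onorm (dgrad f x - dgrad f y) / onorm (x - y)}

/-- Gaussian width of a set `K ⊆ ℝ^n`. -/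
def gaussianWidth {n : ℕ} (K : Set (Fin n → ℝ)) : ℝ :=
  ∫ θ, sSup ((fun v => ∑ i, v i * θ i) '' K)
    ∂(Measure.pi fun _ : Fin n => ProbabilityTheory.gaussianReal 0 1)

/-- Gradient complexity `D(f) = GW({∇f(y) : y ∈ C_n} ∪ {0})`. -/
def gradComplexity {n : ℕ} (f : (Fin n → ℝ) → ℝ) : ℝ :=
  gaussianWidth ((dgrad f '' (cube n : Set (Fin n → ℝ))) ∪ {0})

/-- The Gibbs distribution with Hamiltonian `f`, as a weight function on `ℝ^n`
supported on the cube. -/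
def gibbs {n : ℕ} (f : (Fin n → ℝ) → ℝ) (y : Fin n → ℝ) : ℝ :=
  if y ∈ cube n then Real.exp (f y) / ∑ z ∈ cube n, Real.exp (f z) else 0

/-- The tilt `τ_θ p` of a weight function `p` on the cube. -/
def tilt {n : ℕ} (p : (Fin n → ℝ) → ℝ) (θ : Fin n → ℝ) (y : Fin n → ℝ) : ℝ :=
  p y * Real.exp (∑ i, θ i * y i) / ∑ z ∈ cube n, p z * Real.exp (∑ i, θ i * z i)

/-- The mean (center of mass) of the tilted measure `τ_θ p`. -/
def tiltMean {n : ℕ} (p : (Fin n → ℝ) → ℝ) (θ : Fin n → ℝ) : Fin n → ℝ :=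
  fun i => ∑ y ∈ cube n, tilt p θ y * y i

/-- A weight function on the cube is a product measure: the coordinates are
independent Bernoulli-type variables. -/
def IsProduct {n : ℕ} (ξ : (Fin n → ℝ) → ℝ) : Prop :=
  (∀ y, y ∉ cube n → ξ y = 0) ∧
  ∃ q : Fin n → ℝ, (∀ i, q i ∈ Set.Icc (0 : ℝ) 1) ∧
    ∀ y ∈ cube n, ξ y = ∏ i, (if y i = 1 then q i else 1 - q i)

/-- The Wasserstein (transportation) distance between two weight functions on the cube. -/
def W1 {n : ℕ} (p q : (Fin n → ℝ) → ℝ) : ℝ :=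
  sInf {w | ∃ π : (Fin n → ℝ) × (Fin n → ℝ) → ℝ,
    (∀ a, 0 ≤ π a) ∧
    (∀ x, ∑ y ∈ cube n, π (x, y) = p x) ∧
    (∀ y, ∑ x ∈ cube n, π (x, y) = q y) ∧
    w = (1 / 2) * ∑ x ∈ cube n, ∑ y ∈ cube n, π (x, y) * onorm (x - y)}

/-- `p` (the law of a random vector on the cube) is a `(ρ,δ,ε)`-tilt-mixture. -/
def IsTiltMixture {n : ℕ} (p : (Fin n → ℝ) → ℝ) (ρ : Measure (Fin n → ℝ))
    (δ ε : ℝ) : Prop :=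
  ∃ m : Measure (Fin n → ℝ), IsProbabilityMeasure m ∧
    m {θ | ¬ (tnorm θ ≤ ε * Real.sqrt n ∧ ∀ i, |θ i| ≤ 1 / 4)} = 0 ∧
    (∀ φ : (Fin n → ℝ) → ℝ,
      ∑ y ∈ cube n, φ y * p y = ∫ θ, ∑ y ∈ cube n, φ y * tilt p θ y ∂m) ∧
    ENNReal.ofReal (1 - δ) <
      m {θ | ∃ ξ, IsProduct ξ ∧ W1 (tilt p θ) ξ ≤ δ * n} ∧
    ρ = m.map (tiltMean p)

/-- The product weight on the cube with mean vector `z ∈ [-1,1]^n`: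
the law of `X(z)`. -/
def prodW {n : ℕ} (z : Fin n → ℝ) (y : Fin n → ℝ) : ℝ := ∏ i, (1 + y i * z i) / 2

/-- `q` (the law of a random vector `X` on the cube) is a `(ρ,δ)`-mixture:
there is a coupling of `X(ρ)` and `X` with `E‖X(ρ) - X‖₁ ≤ δ n`. -/
def IsMixture {n : ℕ} (q : (Fin n → ℝ) → ℝ) (ρ : Measure (Fin n → ℝ)) (δ : ℝ) : Prop :=
  ∃ π : (Fin n → ℝ) × (Fin n → ℝ) → ℝ,
    (∀ a, 0 ≤ π a) ∧
    (∀ x ∈ cube n, ∑ y ∈ cube n, π (x, y) = ∫ z, prodW z x ∂ρ) ∧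
    (∀ y, ∑ x ∈ cube n, π (x, y) = q y) ∧
    ∑ x ∈ cube n, ∑ y ∈ cube n, π (x, y) * onorm (x - y) ≤ δ * n

/-- `f_ν = log(dν/dμ)` for a weight function `p` on the cube (`μ` uniform). -/
def hamOf {n : ℕ} (p : (Fin n → ℝ) → ℝ) : (Fin n → ℝ) → ℝ :=
  fun y => Real.log ((2 : ℝ) ^ n * p y)

/-- `Tr(H(ν))` for a weight function `p` on the cube. -/
def traceH {n : ℕ} (p : (Fin n → ℝ) → ℝ) : ℝ :=
  ∑ i, ((∑ y ∈ cube n, p y * (Real.tanh (dd (hamOf p) i y)) ^ 2) -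
    (∑ y ∈ cube n, p y * Real.tanh (dd (hamOf p) i y)) ^ 2)

/-!
Both gradients are averages under the product measure `μₓ = prodW x` on the cube with mean
`x`, because the multilinear extension of `g` at `x` is `E_{μₓ} g`. At a vertex `y`, `f y` is
one of the two values compared by `∂ᵢ f y`, so Taylor's theorem gives
`|∂ᵢ(h ∘ f) y - h'(f y) ∂ᵢ f y| ≤ B L²`, and replacing `h'(f y)` by `h'(E f)` costs
`B L |f y - E f|`. Hence each coordinate is off by at most `B L² + B L E|f - E f|`, and
`E|f - E f| ≤ √n L` by the Efron–Stein inequality `Var_{μₓ} f ≤ n L²`. The latter follows by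
revealing the coordinates of `y` one at a time: the multilinear extension is affine in each
coordinate with slope the extension of `∂_κ f`, so each step adds
`(1 - x_κ²) E[(∂_κ f)²] ≤ L²` to the second moment.
-/

open Finset Function

section Cube

variable {n : ℕ}

lemma mem_cube {y : Fin n → ℝ} : y ∈ cube n ↔ ∀ i, y i = -1 ∨ y i = 1 := by
  simp [cube, Fintype.mem_piFinset]

lemma mem_Icc_of_mem_cube {y : Fin n → ℝ} (hy : y ∈ cube n) (i : Fin n) :
    y i ∈ Set.Icc (-1 : ℝ) 1 := by
  rcases mem_cube.1 hy i with h | h <;> simp [h]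

lemma sq_apply_of_mem_cube {y : Fin n → ℝ} (hy : y ∈ cube n) (i : Fin n) : y i ^ 2 = 1 := by
  rcases mem_cube.1 hy i with h | h <;> simp [h]

lemma update_neg_mem_cube {y : Fin n → ℝ} (hy : y ∈ cube n) (κ : Fin n) :
    update y κ (-y κ) ∈ cube n := by
  refine mem_cube.2 fun i => ?_
  rcases eq_or_ne i κ with rfl | hi
  · rcases mem_cube.1 hy i with h | h <;> simp [h]
  · simpa [update_of_ne hi] using mem_cube.1 hy i

lemma sum_cube_eq_sum_avg (g : (Fin n → ℝ) → ℝ) (κ : Fin n) :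
    ∑ y ∈ cube n, g y = ∑ y ∈ cube n, (g (update y κ 1) + g (update y κ (-1))) / 2 := by
  have hflip : ∑ y ∈ cube n, g (update y κ (-y κ)) = ∑ y ∈ cube n, g y :=
    sum_nbij' (fun y => update y κ (-y κ)) (fun y => update y κ (-y κ))
      (fun y hy => update_neg_mem_cube hy κ) (fun y hy => update_neg_mem_cube hy κ)
      (fun y _ => by simp) (fun y _ => by simp) (fun _ _ => rfl)
  have hpair : ∀ y ∈ cube n,
      g (update y κ 1) + g (update y κ (-1)) = g y + g (update y κ (-y κ)) := by
    intro y hy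
    rcases mem_cube.1 hy κ with h | h
    · rw [add_comm, ← h, update_eq_self, h, neg_neg]
    · rw [← h, update_eq_self, h]
  rw [← sum_div, sum_congr rfl hpair, sum_add_distrib, hflip]
  ring

end Cube

section ProductWeight

variable {n : ℕ}

lemma prodW_nonneg {x y : Fin n → ℝ} (hx : ∀ i, x i ∈ Set.Icc (-1 : ℝ) 1)
    (hy : y ∈ cube n) :
    0 ≤ prodW x y := by
  refine prod_nonneg fun i _ => ?_
  obtain ⟨h₁, h₂⟩ := hx i
  rcases mem_cube.1 hy i with h | h <;> rw [h] <;> linarith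

lemma sum_prodW (x : Fin n → ℝ) : ∑ y ∈ cube n, prodW x y = 1 := by
  simp only [cube, prodW]
  rw [← prod_univ_sum (fun _ => ({-1, 1} : Finset ℝ)) fun i s => (1 + s * x i) / 2]
  exact prod_eq_one fun i _ => by norm_num [sum_pair]; ring

lemma prodW_of_mem_cube {y z : Fin n → ℝ} (hy : y ∈ cube n) (hz : z ∈ cube n) :
    prodW y z = if z = y then 1 else 0 := by
  have hfactor : ∀ i, (1 + z i * y i) / 2 = if z i = y i then 1 else 0 := by
    intro i
    rcases mem_cube.1 hy i with h | h <;> rcases mem_cube.1 hz i with h' | h' <;> norm_num [h, h']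
  simp only [prodW, hfactor, prod_boole, mem_univ, true_implies, funext_iff]

lemma prodW_update_zero_update (x y : Fin n → ℝ) (κ : Fin n) (s : ℝ) :
    prodW (update x κ 0) (update y κ s) = prodW (update x κ 0) y := by
  refine prod_congr rfl fun i _ => ?_
  rcases eq_or_ne i κ with rfl | hi
  · simp
  · rw [update_of_ne hi]

lemma prodW_eq_mul_prodW_update_zero (x y : Fin n → ℝ) (κ : Fin n) :
    prodW x y = (1 + y κ * x κ) * prodW (update x κ 0) y := by
  have hrest : ∏ i ∈ univ.erase κ, (1 + y i * update x κ 0 i) / 2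
      = ∏ i ∈ univ.erase κ, (1 + y i * x i) / 2 :=
    prod_congr rfl fun i hi => by rw [update_of_ne (ne_of_mem_erase hi)]
  rw [prodW, prodW, ← mul_prod_erase _ _ (mem_univ κ), ← mul_prod_erase _ _ (mem_univ κ),
    hrest, update_self]
  ring

lemma prodW_update_left (x y : Fin n → ℝ) (κ : Fin n) (t : ℝ) :
    prodW (update x κ t) y = (1 + y κ * t) * prodW (update x κ 0) y := by
  rw [prodW_eq_mul_prodW_update_zero _ y κ, update_self, update_idem]

lemma prodW_update_right (x y : Fin n → ℝ) (κ : Fin n) (s : ℝ) :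
    prodW x (update y κ s) = (1 + s * x κ) * prodW (update x κ 0) y := by
  rw [prodW_eq_mul_prodW_update_zero x _ κ, update_self, prodW_update_zero_update]

end ProductWeight

section MultilinearExtension

variable {n : ℕ}

lemma mlext_eq_sum_prodW (g : (Fin n → ℝ) → ℝ) (x : Fin n → ℝ) :
    mlext g x = ∑ y ∈ cube n, prodW x y * g y := by
  have hsubsets : ∀ y : Fin n → ℝ,
      ∑ S : Finset (Fin n), ∏ i ∈ S, (y i * x i) = 2 ^ n * prodW x y := by
    intro y
    rw [← powerset_univ, ← prod_one_add, prodW, prod_div_distrib, prod_const, card_univ,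
      Fintype.card_fin]
    field_simp
  simp_rw [mlext, mul_sum, sum_mul]
  rw [sum_comm]
  refine sum_congr rfl fun y _ => ?_
  simp_rw [mul_assoc, ← prod_mul_distrib, ← mul_sum, hsubsets]
  field_simp

lemma mlext_of_mem_cube (g : (Fin n → ℝ) → ℝ) {y : Fin n → ℝ} (hy : y ∈ cube n) :
    mlext g y = g y := by
  rw [mlext_eq_sum_prodW, sum_eq_single_of_mem y hy fun z hz hzy => by
      rw [prodW_of_mem_cube hy hz, if_neg hzy, zero_mul],
    prodW_of_mem_cube hy hy, if_pos rfl, one_mul]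

lemma abs_mlext_le {g : (Fin n → ℝ) → ℝ} {x : Fin n → ℝ} {C : ℝ}
    (hx : ∀ i, x i ∈ Set.Icc (-1 : ℝ) 1) (hg : ∀ y ∈ cube n, |g y| ≤ C) :
    |mlext g x| ≤ C :=
  calc |mlext g x| ≤ ∑ y ∈ cube n, |prodW x y * g y| := by
        rw [mlext_eq_sum_prodW]; exact abs_sum_le_sum_abs _ _
    _ ≤ ∑ y ∈ cube n, prodW x y * C := sum_le_sum fun y hy => by
        rw [abs_mul, abs_of_nonneg (prodW_nonneg hx hy)]
        exact mul_le_mul_of_nonneg_left (hg y hy) (prodW_nonneg hx hy)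
    _ = C := by rw [← sum_mul, sum_prodW, one_mul]

lemma dd_update_self (g : (Fin n → ℝ) → ℝ) (κ : Fin n) (y : Fin n → ℝ) (s : ℝ) :
    dd g κ (update y κ s) = dd g κ y := by
  simp only [dd, update_idem]

lemma sum_prodW_mul_sub_eq_zero (x : Fin n → ℝ) (κ : Fin n) {c : (Fin n → ℝ) → ℝ}
    (hc : ∀ y s, c (update y κ s) = c y) :
    ∑ y ∈ cube n, prodW x y * (c y * (y κ - x κ)) = 0 := by
  rw [sum_cube_eq_sum_avg _ κ]
  refine sum_eq_zero fun y _ => ?_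
  simp only [prodW_update_right, hc, update_self]
  ring

lemma mlext_dd_eq_sum (g : (Fin n → ℝ) → ℝ) (x : Fin n → ℝ) (κ : Fin n) :
    mlext (dd g κ) x = ∑ y ∈ cube n, y κ * prodW (update x κ 0) y * g y := by
  rw [mlext_eq_sum_prodW, sum_cube_eq_sum_avg _ κ, sum_cube_eq_sum_avg (fun y => _ * g y) κ]
  refine sum_congr rfl fun y _ => ?_
  simp only [prodW_update_right, dd_update_self, update_self, update_idem]
  rw [dd]
  ring

lemma mlext_update (g : (Fin n → ℝ) → ℝ) (x : Fin n → ℝ) (κ : Fin n) (t : ℝ) :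
    mlext g (update x κ t) = mlext g (update x κ 0) + t * mlext (dd g κ) x := by
  rw [mlext_dd_eq_sum, mlext_eq_sum_prodW, mlext_eq_sum_prodW, mul_sum, ← sum_add_distrib]
  simp only [prodW_update_left x _ κ t]
  exact sum_congr rfl fun y _ => by ring

end MultilinearExtension

section Variance

variable {n : ℕ} {f : (Fin n → ℝ) → ℝ} {x : Fin n → ℝ} {L : ℝ}

lemma piecewise_mem_Icc (hx : ∀ i, x i ∈ Set.Icc (-1 : ℝ) 1) {y : Fin n → ℝ}
    (hy : y ∈ cube n) (T : Finset (Fin n)) (i : Fin n) :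
    T.piecewise y x i ∈ Set.Icc (-1 : ℝ) 1 := by
  by_cases hi : i ∈ T
  · rw [piecewise_eq_of_mem _ _ _ hi]; exact mem_Icc_of_mem_cube hy i
  · rw [piecewise_eq_of_notMem _ _ _ hi]; exact hx i

lemma piecewise_update_of_notMem {T : Finset (Fin n)} {κ : Fin n} (hκ : κ ∉ T)
    (y x : Fin n → ℝ) (s : ℝ) : T.piecewise (update y κ s) x = T.piecewise y x :=
  T.piecewise_congr (fun _ hi => update_of_ne (ne_of_mem_of_not_mem hi hκ) _ _) fun _ _ => rfl

/-- `y ↦ mlext f (T.piecewise y x)` is the martingale revealing the coordinates in `T` of a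
sample `y` of `prodW x`; its increment at `κ` is `(y κ - x κ) * D` with `D` independent of
`y κ`. -/
lemma sum_prodW_mul_sq_mlext_piecewise_insert_le (hx : ∀ i, x i ∈ Set.Icc (-1 : ℝ) 1)
    (hL : ∀ i, ∀ y ∈ cube n, |dd f i y| ≤ L) {T : Finset (Fin n)} {κ : Fin n}
    (hκ : κ ∉ T) :
    ∑ y ∈ cube n, prodW x y * mlext f ((insert κ T).piecewise y x) ^ 2
      ≤ ∑ y ∈ cube n, prodW x y * mlext f (T.piecewise y x) ^ 2 + L ^ 2 := by
  have hincr : ∀ y, mlext f ((insert κ T).piecewise y x)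
      = mlext f (T.piecewise y x) + (y κ - x κ) * mlext (dd f κ) (T.piecewise y x) := by
    intro y
    have hstart := mlext_update f (T.piecewise y x) κ (x κ)
    rw [← piecewise_eq_of_notMem T y x hκ, update_eq_self] at hstart
    rw [piecewise_insert, mlext_update, hstart, piecewise_eq_of_notMem T y x hκ]
    ring
  set M : (Fin n → ℝ) → ℝ := fun y => mlext f (T.piecewise y x) with hM
  set D : (Fin n → ℝ) → ℝ := fun y => mlext (dd f κ) (T.piecewise y x) with hD
  have hexpand : ∀ y ∈ cube n, prodW x y * (M y + (y κ - x κ) * D y) ^ 2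
      = prodW x y * M y ^ 2 + prodW x y * ((1 - x κ ^ 2) * D y ^ 2)
        + prodW x y * ((2 * M y * D y - 2 * x κ * D y ^ 2) * (y κ - x κ)) := by
    intro y hy
    linear_combination prodW x y * D y ^ 2 * sq_apply_of_mem_cube hy κ
  have hsecond : ∑ y ∈ cube n, prodW x y * ((1 - x κ ^ 2) * D y ^ 2) ≤ L ^ 2 :=
    calc ∑ y ∈ cube n, prodW x y * ((1 - x κ ^ 2) * D y ^ 2)
        ≤ ∑ y ∈ cube n, prodW x y * L ^ 2 := sum_le_sum fun y hy => by
          refine mul_le_mul_of_nonneg_left ?_ (prodW_nonneg hx hy)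
          have hDy := abs_le.1 (abs_mlext_le (piecewise_mem_Icc hx hy T) (hL κ))
          have hDL : D y ^ 2 ≤ L ^ 2 := sq_le_sq' hDy.1 hDy.2
          nlinarith [mul_nonneg (sq_nonneg (x κ)) (sq_nonneg (D y))]
      _ = L ^ 2 := by rw [← sum_mul, sum_prodW, one_mul]
  have hcross := sum_prodW_mul_sub_eq_zero x κ (c := fun y => 2 * M y * D y - 2 * x κ * D y ^ 2)
    fun y s => by simp only [hM, hD, piecewise_update_of_notMem hκ]
  rw [sum_congr rfl fun y hy => by rw [hincr, hexpand y hy], sum_add_distrib, sum_add_distrib,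
    hcross]
  linarith

lemma sum_prodW_mul_sq_mlext_piecewise_le (hx : ∀ i, x i ∈ Set.Icc (-1 : ℝ) 1)
    (hL : ∀ i, ∀ y ∈ cube n, |dd f i y| ≤ L) (T : Finset (Fin n)) :
    ∑ y ∈ cube n, prodW x y * mlext f (T.piecewise y x) ^ 2 ≤ mlext f x ^ 2 + #T * L ^ 2 := by
  induction T using Finset.induction_on with
  | empty => simp [← sum_mul, sum_prodW]
  | insert κ T hκ ih =>
    rw [card_insert_of_notMem hκ, Nat.cast_succ]
    linarith [sum_prodW_mul_sq_mlext_piecewise_insert_le hx hL hκ]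

lemma sum_prodW_mul_sq_sub_mlext_le (hx : ∀ i, x i ∈ Set.Icc (-1 : ℝ) 1)
    (hL : ∀ i, ∀ y ∈ cube n, |dd f i y| ≤ L) :
    ∑ y ∈ cube n, prodW x y * (f y - mlext f x) ^ 2 ≤ n * L ^ 2 := by
  have hsecond : ∑ y ∈ cube n, prodW x y * f y ^ 2 ≤ mlext f x ^ 2 + n * L ^ 2 := by
    have htop := sum_prodW_mul_sq_mlext_piecewise_le hx hL univ
    simp only [piecewise_univ, card_univ, Fintype.card_fin] at htop
    rwa [sum_congr rfl fun y hy => by rw [mlext_of_mem_cube f hy]] at htop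
  calc ∑ y ∈ cube n, prodW x y * (f y - mlext f x) ^ 2
      = ∑ y ∈ cube n, prodW x y * f y ^ 2 - 2 * mlext f x * ∑ y ∈ cube n, prodW x y * f y
        + mlext f x ^ 2 * ∑ y ∈ cube n, prodW x y := by
        rw [mul_sum, mul_sum, ← sum_sub_distrib, ← sum_add_distrib]
        exact sum_congr rfl fun _ _ => by ring
    _ = ∑ y ∈ cube n, prodW x y * f y ^ 2 - mlext f x ^ 2 := by
        rw [← mlext_eq_sum_prodW f x, sum_prodW]; ring
    _ ≤ n * L ^ 2 := by linarith

lemma sum_prodW_mul_abs_sub_mlext_le (hx : ∀ i, x i ∈ Set.Icc (-1 : ℝ) 1)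
    (hL : ∀ i, ∀ y ∈ cube n, |dd f i y| ≤ L) (hL0 : 0 ≤ L) :
    ∑ y ∈ cube n, prodW x y * |f y - mlext f x| ≤ √n * L := by
  have hjensen : (∑ y ∈ cube n, prodW x y * |f y - mlext f x|) ^ 2
      ≤ ∑ y ∈ cube n, prodW x y * (f y - mlext f x) ^ 2 := by
    simpa only [smul_eq_mul, sq_abs] using (convexOn_pow 2).map_sum_le
      (fun y hy => prodW_nonneg hx hy) (sum_prodW x) fun y _ => abs_nonneg (f y - mlext f x)
  calc ∑ y ∈ cube n, prodW x y * |f y - mlext f x|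
      ≤ √(∑ y ∈ cube n, prodW x y * (f y - mlext f x) ^ 2) :=
        (le_abs_self _).trans (Real.abs_le_sqrt hjensen)
    _ ≤ √(n * L ^ 2) := Real.sqrt_le_sqrt (sum_prodW_mul_sq_sub_mlext_le hx hL)
    _ = √n * L := by rw [Real.sqrt_mul (Nat.cast_nonneg n), Real.sqrt_sq hL0]

end Variance

section Calculus

variable {h h' h'' : ℝ → ℝ} {B : ℝ}

lemma abs_sub_le_of_hasDerivAt_of_abs_le (hd : ∀ x, HasDerivAt h' (h'' x) x)
    (hB : ∀ x, |h'' x| ≤ B) (s t : ℝ) : |h' s - h' t| ≤ B * |s - t| := by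
  simpa only [Real.norm_eq_abs] using convex_univ.norm_image_sub_le_of_norm_hasDerivWithin_le
    (fun u _ => (hd u).hasDerivWithinAt) (fun u _ => (hB u)) (Set.mem_univ t) (Set.mem_univ s)

lemma abs_taylor_remainder_le_of_le (hd1 : ∀ x, HasDerivAt h (h' x) x)
    (hd2 : ∀ x, HasDerivAt h' (h'' x) x) (hB : ∀ x, |h'' x| ≤ B) {c a : ℝ} (hca : c ≤ a) :
    |h a - h c - h' c * (a - c)| ≤ B / 2 * (a - c) ^ 2 := by
  have hrem : ∀ t, HasDerivAt (fun t => h t - h c - h' c * (t - c)) (h' t - h' c) t := fun t =>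
    (((hd1 t).sub_const (h c)).sub
      (((hasDerivAt_id t).sub_const c).const_mul (h' c))).congr_deriv (by ring)
  have hbound : ∀ t, HasDerivAt (fun t => B / 2 * (t - c) ^ 2) (B * (t - c)) t := fun t =>
    ((((hasDerivAt_id t).sub_const c).pow 2).const_mul (B / 2)).congr_deriv (by simp; ring)
  refine image_norm_le_of_norm_deriv_right_le_deriv_boundary
    (fun t _ => (hrem t).continuousAt.continuousWithinAt) (fun t _ => (hrem t).hasDerivWithinAt)
    (by simp) hbound (fun t ht => ?_) ⟨hca, le_rfl⟩
  rw [Real.norm_eq_abs, ← abs_of_nonneg (sub_nonneg.2 ht.1)]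
  exact abs_sub_le_of_hasDerivAt_of_abs_le hd2 hB t c

lemma abs_taylor_remainder_le (hd1 : ∀ x, HasDerivAt h (h' x) x)
    (hd2 : ∀ x, HasDerivAt h' (h'' x) x) (hB : ∀ x, |h'' x| ≤ B) (c a : ℝ) :
    |h a - h c - h' c * (a - c)| ≤ B / 2 * (a - c) ^ 2 := by
  rcases le_total c a with hca | hac
  · exact abs_taylor_remainder_le_of_le hd1 hd2 hB hca
  · have hreflect := abs_taylor_remainder_le_of_le (h := fun t => h (-t))
      (h' := fun t => -h' (-t)) (h'' := fun t => h'' (-t))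
      (fun t => ((hd1 (-t)).comp t (hasDerivAt_neg t)).congr_deriv (mul_neg_one _))
      (fun t => ((hd2 (-t)).comp t (hasDerivAt_neg t)).neg.congr_deriv (by ring))
      (fun t => hB (-t)) (neg_le_neg hac)
    simp only [neg_neg] at hreflect
    convert hreflect using 2 <;> ring

end Calculus

section ChainRule

variable {n : ℕ} {h h' h'' : ℝ → ℝ} {B : ℝ}

lemma abs_dd_le_lip (f : (Fin n → ℝ) → ℝ) (i : Fin n) {y : Fin n → ℝ}
    (hy : y ∈ cube n) :
    |dd f i y| ≤ lip f := by
  refine le_csSup ⟨∑ j, ∑ z ∈ cube n, |dd f j z|, ?_⟩ ⟨i, y, hy, rfl⟩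
  rintro _ ⟨j, z, hz, rfl⟩
  exact (single_le_sum (fun z _ => abs_nonneg (dd f j z)) hz).trans
    (single_le_sum (f := fun j => ∑ z ∈ cube n, |dd f j z|)
      (fun j _ => sum_nonneg fun _ _ => abs_nonneg _) (mem_univ j))

lemma abs_half_taylor_remainder_le (hd1 : ∀ x, HasDerivAt h (h' x) x)
    (hd2 : ∀ x, HasDerivAt h' (h'' x) x) (hB : ∀ x, |h'' x| ≤ B) (a b : ℝ) :
    |(h a - h b) / 2 - h' b * ((a - b) / 2)| ≤ B * ((a - b) / 2) ^ 2 :=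
  calc |(h a - h b) / 2 - h' b * ((a - b) / 2)| = |h a - h b - h' b * (a - b)| / 2 := by
        rw [← abs_two, ← abs_div, abs_two]; ring_nf
    _ ≤ B / 2 * (a - b) ^ 2 / 2 := by gcongr; exact abs_taylor_remainder_le hd1 hd2 hB b a
    _ = B * ((a - b) / 2) ^ 2 := by ring

lemma abs_dd_comp_sub_mul_dd_le (hd1 : ∀ x, HasDerivAt h (h' x) x)
    (hd2 : ∀ x, HasDerivAt h' (h'' x) x) (hB : ∀ x, |h'' x| ≤ B) (f : (Fin n → ℝ) → ℝ)
    (i : Fin n) {y : Fin n → ℝ} (hy : y ∈ cube n) :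
    |dd (h ∘ f) i y - h' (f y) * dd f i y| ≤ B * dd f i y ^ 2 := by
  simp only [dd, comp_apply]
  rcases mem_cube.1 hy i with hyi | hyi
  · have hfy : f y = f (update y i (-1)) := by rw [← hyi, update_eq_self]
    rw [hfy]
    exact abs_half_taylor_remainder_le hd1 hd2 hB _ _
  · have hfy : f y = f (update y i 1) := by rw [← hyi, update_eq_self]
    rw [hfy, ← abs_neg]
    convert abs_half_taylor_remainder_le hd1 hd2 hB (f (update y i (-1))) (f (update y i 1))
      using 2 <;> ring

lemma abs_dd_comp_sub_le (hd1 : ∀ x, HasDerivAt h (h' x) x)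
    (hd2 : ∀ x, HasDerivAt h' (h'' x) x) (hB : ∀ x, |h'' x| ≤ B) (f : (Fin n → ℝ) → ℝ)
    (i : Fin n) {y : Fin n → ℝ} (hy : y ∈ cube n) {L : ℝ} (hLy : |dd f i y| ≤ L)
    (F : ℝ) :
    |dd (h ∘ f) i y - h' F * dd f i y| ≤ B * L ^ 2 + B * L * |f y - F| := by
  have hB0 : 0 ≤ B := (abs_nonneg _).trans (hB 0)
  have hsq : dd f i y ^ 2 ≤ L ^ 2 := sq_le_sq' (abs_le.1 hLy).1 (abs_le.1 hLy).2
  calc |dd (h ∘ f) i y - h' F * dd f i y|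
      = |(dd (h ∘ f) i y - h' (f y) * dd f i y) + (h' (f y) - h' F) * dd f i y| := by
        congr 1; ring
    _ ≤ |dd (h ∘ f) i y - h' (f y) * dd f i y| + |h' (f y) - h' F| * |dd f i y| := by
        rw [← abs_mul]; exact abs_add_le _ _
    _ ≤ B * dd f i y ^ 2 + B * |f y - F| * L :=
        add_le_add (abs_dd_comp_sub_mul_dd_le hd1 hd2 hB f i hy)
          (mul_le_mul (abs_sub_le_of_hasDerivAt_of_abs_le hd2 hB _ _) hLy (abs_nonneg _)
            (by positivity))
    _ ≤ B * L ^ 2 + B * L * |f y - F| := by nlinarith [mul_le_mul_of_nonneg_left hsq hB0]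

lemma abs_mlgrad_comp_sub_le (hd1 : ∀ x, HasDerivAt h (h' x) x)
    (hd2 : ∀ x, HasDerivAt h' (h'' x) x) (hB : ∀ x, |h'' x| ≤ B) {f : (Fin n → ℝ) → ℝ}
    {x : Fin n → ℝ} (hx : ∀ i, x i ∈ Set.Icc (-1 : ℝ) 1) {L : ℝ}
    (hL : ∀ i, ∀ y ∈ cube n, |dd f i y| ≤ L) (i : Fin n) :
    |mlgrad (h ∘ f) x i - h' (mlext f x) * mlgrad f x i| ≤ B * L ^ 2 * (1 + √n) := by
  have hL0 : 0 ≤ L := (abs_nonneg _).trans (hL i (fun _ => 1) (mem_cube.2 fun _ => Or.inr rfl))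
  have hB0 : 0 ≤ B := (abs_nonneg _).trans (hB 0)
  set F := mlext f x
  calc |mlgrad (h ∘ f) x i - h' F * mlgrad f x i|
      = |∑ y ∈ cube n, prodW x y * (dd (h ∘ f) i y - h' F * dd f i y)| := by
        simp only [mlgrad, mlext_eq_sum_prodW, mul_sum, ← sum_sub_distrib]
        congr 1; exact sum_congr rfl fun _ _ => by ring
    _ ≤ ∑ y ∈ cube n, prodW x y * (B * L ^ 2 + B * L * |f y - F|) :=
        (abs_sum_le_sum_abs _ _).trans <| sum_le_sum fun y hy => by
          rw [abs_mul, abs_of_nonneg (prodW_nonneg hx hy)]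
          exact mul_le_mul_of_nonneg_left (abs_dd_comp_sub_le hd1 hd2 hB f i hy (hL i y hy) F)
            (prodW_nonneg hx hy)
    _ = B * L ^ 2 + B * L * ∑ y ∈ cube n, prodW x y * |f y - F| := by
        simp only [mul_add, sum_add_distrib, ← sum_mul, sum_prodW, one_mul, mul_sum]
        exact congrArg _ (sum_congr rfl fun _ _ => by ring)
    _ ≤ B * L ^ 2 + B * L * (√n * L) := (add_le_add_iff_left _).2 <|
        mul_le_mul_of_nonneg_left (sum_prodW_mul_abs_sub_mlext_le hx hL hL0) (mul_nonneg hB0 hL0)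
    _ = B * L ^ 2 * (1 + √n) := by ring

end ChainRule

/-- Chain rule for the discrete gradient, extension version.
If `Lip(f) = L` and `h` is twice differentiable with `|h''| < B`, then for every
`x ∈ [-1,1]^n`, `‖∇(h∘f)(x) - h'(f(x))·∇f(x)‖₁ ≤ 2 B L² n^{3/2}`, where `f`, `∇f`
and `∇(h∘f)` are evaluated via their multilinear extensions. -/
theorem chain_rule_extension (n : ℕ) (f : (Fin n → ℝ) → ℝ)
    (L : ℝ) (hL : lip f = L)
    (h h' h'' : ℝ → ℝ) (B : ℝ)
    (hd1 : ∀ x, HasDerivAt h (h' x) x)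
    (hd2 : ∀ x, HasDerivAt h' (h'' x) x)
    (hB : ∀ x, |h'' x| < B)
    (x : Fin n → ℝ) (hx : ∀ i, x i ∈ Set.Icc (-1 : ℝ) 1) :
    onorm (fun i => mlgrad (h ∘ f) x i - h' (mlext f x) * mlgrad f x i) ≤
      2 * B * L ^ 2 * (n : ℝ) ^ ((3 : ℝ) / 2) := by
  have hLf : ∀ i, ∀ y ∈ cube n, |dd f i y| ≤ L := hL ▸ fun i _ hy => abs_dd_le_lip f i hy
  have hB' : ∀ t, |h'' t| ≤ B := fun t => (hB t).le
  have hBL : 0 ≤ B * L ^ 2 := mul_nonneg ((abs_nonneg _).trans (hB' 0)) (sq_nonneg L)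
  have hpow : (n : ℝ) ^ ((3 : ℝ) / 2) = n * √n := by
    rw [show (3 : ℝ) / 2 = 1 + 1 / 2 by norm_num,
      Real.rpow_add' (Nat.cast_nonneg n) (by norm_num), Real.rpow_one, Real.sqrt_eq_rpow]
  have hn : (n : ℝ) ≤ n * √n := by
    rcases n.eq_zero_or_pos with rfl | hn
    · simp
    · exact le_mul_of_one_le_right (Nat.cast_nonneg n) (Real.one_le_sqrt.2 (by exact_mod_cast hn))
  calc onorm (fun i => mlgrad (h ∘ f) x i - h' (mlext f x) * mlgrad f x i)
      ≤ ∑ _i : Fin n, B * L ^ 2 * (1 + √n) :=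
        sum_le_sum fun i _ => abs_mlgrad_comp_sub_le hd1 hd2 hB' hx hLf i
    _ = B * L ^ 2 * (n + n * √n) := by
        simp only [sum_const, card_univ, Fintype.card_fin, nsmul_eq_mul]; ring
    _ ≤ 2 * B * L ^ 2 * (n : ℝ) ^ ((3 : ℝ) / 2) := by
        rw [hpow]; nlinarith [mul_le_mul_of_nonneg_left hn hBL]

end Paper
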